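/- arXiv:2205.08879 — 4 statements merged into one kernel-verified Lean document; each statement's English description precedes it below -/
import Mathlib

section
/- Let ([P*],[u*]) be an optimal process for the free-payments control problem with η∈[0,1) and γ>0. A node whose liabilities have been fully paid by period t receives no further cash injections: if p̄*_i(t)=0, where p̄*(t)=P̄*(t)1 is the residual liability vector generated by the optimal process, then u*_i(s)=0 for all s∈{t,…,T−1}. -/
open Finset

noncomputable section

/-- Residual liability matrices: `P̄(0) = P̄`, `P̄(t+1) = α (P̄(t) - P(t))`. -/
def resLiab {n : ℕ} (α : ℝ) (Pbar : Matrix (Fin n) (Fin n) ℝ)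
    (P : ℕ → Matrix (Fin n) (Fin n) ℝ) : ℕ → Matrix (Fin n) (Fin n) ℝ
  | 0 => Pbar
  | t + 1 => fun i j => α * (resLiab α Pbar P t i j - P t i j)

/-- Net worths: `w(0) = 0`, `w(t+1) = w(t) + c(t) + P(t)ᵀ1 - P(t)1`. -/
def netWorth {n : ℕ} (c : ℕ → Fin n → ℝ)
    (P : ℕ → Matrix (Fin n) (Fin n) ℝ) : ℕ → Fin n → ℝ
  | 0 => fun _ => 0
  | t + 1 => fun i => netWorth c P t i + c t i + (∑ j, P t j i) - (∑ j, P t i j)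

/-- Cumulative injected cash `B(t) = Σ_{k=0}^{t} 1ᵀ u(k)`. -/
def budget {n : ℕ} (u : ℕ → Fin n → ℝ) (t : ℕ) : ℝ :=
  ∑ k ∈ range (t + 1), ∑ i, u k i

/-- Feasibility of a process `([P],[u])` for the free-payments control problem. -/
def FeasibleFree {n : ℕ} (T : ℕ) (α : ℝ) (Pbar : Matrix (Fin n) (Fin n) ℝ)
    (e : ℕ → Fin n → ℝ) (F : ℕ → ℝ)
    (P : ℕ → Matrix (Fin n) (Fin n) ℝ) (u : ℕ → Fin n → ℝ) : Prop :=
  ∀ t, t < T →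
    (∀ i j, 0 ≤ P t i j) ∧ (∀ i, 0 ≤ u t i) ∧
    (∀ i j, P t i j ≤ resLiab α Pbar P t i j) ∧
    (∀ i, 0 ≤ netWorth (fun s i => e s i + u s i) P (t + 1) i) ∧
    budget u t ≤ F t

/-- Cost `J([P],[u])` of the free-payments control problem. -/
def costFree {n : ℕ} (T : ℕ) (α η γ : ℝ) (Pbar : Matrix (Fin n) (Fin n) ℝ)
    (P : ℕ → Matrix (Fin n) (Fin n) ℝ) (u : ℕ → Fin n → ℝ) : ℝ :=
  (1 - η) * ∑ t ∈ range T, ∑ i, ∑ j, (resLiab α Pbar P t i j - P t i j)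
    + η * ∑ i, ∑ j, resLiab α Pbar P T i j
    + γ * budget u (T - 1)

/-- Optimality for the free-payments control problem. -/
def OptimalFree {n : ℕ} (T : ℕ) (α η γ : ℝ) (Pbar : Matrix (Fin n) (Fin n) ℝ)
    (e : ℕ → Fin n → ℝ) (F : ℕ → ℝ)
    (P : ℕ → Matrix (Fin n) (Fin n) ℝ) (u : ℕ → Fin n → ℝ) : Prop :=
  FeasibleFree T α Pbar e F P u ∧
  ∀ P' u', FeasibleFree T α Pbar e F P' u' →
    costFree T α η γ Pbar P u ≤ costFree T α η γ Pbar P' u'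

/-!
Once all liabilities of node `i` are settled, feasibility forbids it from paying anything
afterwards, so its net worth can only grow: cash `u_i(s)` injected at `s ≥ t` stays in its books
until `T`. Withdrawing that injection therefore keeps every net worth and every budget constraint
satisfied, leaves all liabilities unchanged and lowers the cost by `γ u_i(s)`; optimality then
forces `u_i(s) = 0`.
-/

section FreePayments

variable {n T : ℕ} {α : ℝ} {Pbar : Matrix (Fin n) (Fin n) ℝ} {e : ℕ → Fin n → ℝ} {F : ℕ → ℝ}
  {P : ℕ → Matrix (Fin n) (Fin n) ℝ} {u : ℕ → Fin n → ℝ}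

theorem sum_range_ite_and_eq (s m : ℕ) (i l : Fin n) (δ : ℝ) :
    ∑ k ∈ range m, (if k = s ∧ l = i then δ else 0) = if s < m ∧ l = i then δ else 0 := by
  by_cases hl : l = i <;> simp [hl]

theorem netWorth_eq_sub_sum_of_cash_eq_sub (c c' d : ℕ → Fin n → ℝ)
    (P : ℕ → Matrix (Fin n) (Fin n) ℝ) (hc : ∀ k l, c' k l = c k l - d k l) (τ : ℕ) (l : Fin n) :
    netWorth c' P τ l = netWorth c P τ l - ∑ k ∈ range τ, d k l := by
  induction τ with
  | zero => simp [netWorth]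
  | succ τ ih => simp only [netWorth, ih, hc, sum_range_succ]; ring

theorem netWorth_add_cash_le_succ (c : ℕ → Fin n → ℝ) {m : ℕ} {i : Fin n}
    (hout : ∀ j, P m i j = 0) (hin : ∀ j, 0 ≤ P m j i) :
    netWorth c P m i + c m i ≤ netWorth c P (m + 1) i := by
  have : 0 ≤ ∑ j, P m j i := sum_nonneg fun j _ => hin j
  simp only [netWorth, hout, sum_const_zero]
  linarith

theorem budget_sub (u d : ℕ → Fin n → ℝ) (τ : ℕ) :
    budget (fun k l => u k l - d k l) τ = budget u τ - budget d τ := by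
  simp only [budget, sum_sub_distrib]

theorem costFree_sub_injection (α η γ : ℝ) (Pbar : Matrix (Fin n) (Fin n) ℝ)
    (P : ℕ → Matrix (Fin n) (Fin n) ℝ) (u d : ℕ → Fin n → ℝ) :
    costFree T α η γ Pbar P (fun k l => u k l - d k l)
      = costFree T α η γ Pbar P u - γ * budget d (T - 1) := by
  simp only [costFree, budget_sub]
  ring

namespace FeasibleFree

theorem netWorth_nonneg (h : FeasibleFree T α Pbar e F P u) {τ : ℕ} (hτ : τ ≤ T) (l : Fin n) :
    0 ≤ netWorth (fun s i => e s i + u s i) P τ l := by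
  cases τ with
  | zero => exact le_rfl
  | succ τ => exact (h τ hτ).2.2.2.1 l

theorem resLiab_nonneg (h : FeasibleFree T α Pbar e F P u) (hα : 0 ≤ α)
    (hPbar : ∀ i j, 0 ≤ Pbar i j) {τ : ℕ} (hτ : τ ≤ T) (i j : Fin n) :
    0 ≤ resLiab α Pbar P τ i j := by
  cases τ with
  | zero => exact hPbar i j
  | succ τ => exact mul_nonneg hα (sub_nonneg.mpr ((h τ hτ).2.2.1 i j))

theorem payment_eq_zero (h : FeasibleFree T α Pbar e F P u) {m : ℕ} (hm : m < T) {i j : Fin n}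
    (hR : resLiab α Pbar P m i j = 0) : P m i j = 0 :=
  le_antisymm (hR ▸ (h m hm).2.2.1 i j) ((h m hm).1 i j)

theorem payment_eq_zero_of_le (h : FeasibleFree T α Pbar e F P u) {t : ℕ} {i : Fin n}
    (hR : ∀ j, resLiab α Pbar P t i j = 0) {m : ℕ} (htm : t ≤ m) (hm : m < T) (j : Fin n) :
    P m i j = 0 := by
  suffices hRm : resLiab α Pbar P m i j = 0 from h.payment_eq_zero hm hRm
  induction m, htm using Nat.le_induction with
  | base => exact hR j
  | succ m _ ih =>
    have hRm := ih (Nat.lt_of_succ_lt hm)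
    simp only [resLiab, hRm, h.payment_eq_zero (Nat.lt_of_succ_lt hm) hRm, sub_zero, mul_zero]

theorem injection_le_netWorth (h : FeasibleFree T α Pbar e F P u)
    (he : ∀ t, t < T → ∀ i, 0 ≤ e t i) {s : ℕ} {i : Fin n}
    (hpay : ∀ m, s ≤ m → m < T → ∀ j, P m i j = 0) {m : ℕ} (hsm : s ≤ m) (hm : m < T) :
    u s i ≤ netWorth (fun s i => e s i + u s i) P (m + 1) i := by
  induction m, hsm using Nat.le_induction with
  | base =>
    have := netWorth_add_cash_le_succ (fun s i => e s i + u s i) (hpay s le_rfl hm)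
      fun j => (h s hm).1 j i
    linarith [h.netWorth_nonneg hm.le i, he s hm i]
  | succ m hsm ih =>
    have := netWorth_add_cash_le_succ (fun s i => e s i + u s i) (hpay (m + 1) (by omega) hm)
      fun j => (h (m + 1) hm).1 j i
    linarith [ih (Nat.lt_of_succ_lt hm), he (m + 1) hm i, (h (m + 1) hm).2.1 i]

theorem sub_injection (h : FeasibleFree T α Pbar e F P u) {d : ℕ → Fin n → ℝ}
    (hd : ∀ k l, 0 ≤ d k l) (hdu : ∀ k, k < T → ∀ l, d k l ≤ u k l)
    (hdw : ∀ τ, τ < T → ∀ l,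
      ∑ k ∈ range (τ + 1), d k l ≤ netWorth (fun s i => e s i + u s i) P (τ + 1) l) :
    FeasibleFree T α Pbar e F P (fun k l => u k l - d k l) := by
  intro τ hτ
  obtain ⟨hP, -, hPle, -, hB⟩ := h τ hτ
  refine ⟨hP, fun l => sub_nonneg.mpr (hdu τ hτ l), hPle, fun l => ?_, ?_⟩
  · rw [netWorth_eq_sub_sum_of_cash_eq_sub (fun s i => e s i + u s i) _ d P (fun k l => by ring)]
    exact sub_nonneg.mpr (hdw τ hτ l)
  · have : 0 ≤ budget d τ := sum_nonneg fun k _ => sum_nonneg fun l _ => hd k l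
    rw [budget_sub]
    linarith

end FeasibleFree

theorem OptimalFree.budget_nonpos_of_sub_injection {η γ : ℝ} (hγ : 0 < γ)
    (hopt : OptimalFree T α η γ Pbar e F P u) {d : ℕ → Fin n → ℝ}
    (hfeas : FeasibleFree T α Pbar e F P (fun k l => u k l - d k l)) :
    budget d (T - 1) ≤ 0 := by
  have hcost := hopt.2 _ _ hfeas
  rw [costFree_sub_injection] at hcost
  exact nonpos_of_mul_nonpos_right (by linarith) hγ

end FreePayments

theorem stmt10_paid_no_injection_free_general (n T : ℕ)
    (α : ℝ) (hα : 1 ≤ α)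
    (Pbar : Matrix (Fin n) (Fin n) ℝ)
    (hPbar : ∀ i j, 0 ≤ Pbar i j)
    (e : ℕ → Fin n → ℝ) (he : ∀ t, t < T → ∀ i, 0 ≤ e t i)
    (F : ℕ → ℝ)
    (η γ : ℝ) (hγ : 0 < γ)
    (Pstar : ℕ → Matrix (Fin n) (Fin n) ℝ) (ustar : ℕ → Fin n → ℝ)
    (hopt : OptimalFree T α η γ Pbar e F Pstar ustar) :
    ∀ i : Fin n, ∀ t, t < T →
      (∑ j, resLiab α Pbar Pstar t i j) = 0 →
      ∀ s, t ≤ s → s < T → ustar s i = 0 := by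
  intro i t ht hrow s hts hsT
  have hfeas := hopt.1
  have hR : ∀ j, resLiab α Pbar Pstar t i j = 0 := fun j =>
    (sum_eq_zero_iff_of_nonneg fun j _ =>
      hfeas.resLiab_nonneg (by linarith) hPbar ht.le i j).mp hrow j (mem_univ j)
  have hpay : ∀ m, s ≤ m → m < T → ∀ j, Pstar m i j = 0 := fun m hsm =>
    hfeas.payment_eq_zero_of_le hR (hts.trans hsm)
  set δ := ustar s i
  have hδ : 0 ≤ δ := (hfeas s hsT).2.1 i
  set d : ℕ → Fin n → ℝ := fun k l => if k = s ∧ l = i then δ else 0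
  have hfeas' : FeasibleFree T α Pbar e F Pstar (fun k l => ustar k l - d k l) := by
    refine hfeas.sub_injection (fun k l => by positivity) (fun k hk l => ?_) (fun τ hτ l => ?_)
    · simp only [d]
      split_ifs with hkl
      · rw [hkl.1, hkl.2]
      · exact (hfeas k hk).2.1 l
    · simp only [d, sum_range_ite_and_eq]
      split_ifs with hsl
      · exact hsl.2 ▸ hfeas.injection_le_netWorth he hpay (Nat.lt_succ_iff.mp hsl.1) hτ
      · exact hfeas.netWorth_nonneg hτ l
  have hbudget : budget d (T - 1) = δ := by
    simp only [budget, d, sum_comm (s := range (T - 1 + 1)), sum_range_ite_and_eq]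
    simp [show s < T - 1 + 1 by omega]
  exact le_antisymm (hbudget ▸ hopt.budget_nonpos_of_sub_injection hγ hfeas') hδ

theorem stmt10_paid_no_injection_free (n T : ℕ) (hn : 1 ≤ n) (hT : 1 ≤ T)
    (α : ℝ) (hα : 1 ≤ α)
    (Pbar : Matrix (Fin n) (Fin n) ℝ)
    (hPbar : ∀ i j, 0 ≤ Pbar i j) (hPdiag : ∀ i, Pbar i i = 0)
    (e : ℕ → Fin n → ℝ) (he : ∀ t, t < T → ∀ i, 0 ≤ e t i)
    (F : ℕ → ℝ) (hF : ∀ t, 0 ≤ F t) (hFmono : ∀ s t, s ≤ t → F s ≤ F t)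
    (η γ : ℝ) (hη0 : 0 ≤ η) (hη1 : η < 1) (hγ : 0 < γ)
    (Pstar : ℕ → Matrix (Fin n) (Fin n) ℝ) (ustar : ℕ → Fin n → ℝ)
    (hopt : OptimalFree T α η γ Pbar e F Pstar ustar) :
    ∀ i : Fin n, ∀ t, t < T →
      (∑ j, resLiab α Pbar Pstar t i j) = 0 →
      ∀ s, t ≤ s → s < T → ustar s i = 0 :=
  stmt10_paid_no_injection_free_general n T α hα Pbar hPbar e he F η γ hγ Pstar ustar hopt
end
end

section
/- In the robust pro-rata setting with affine policies p(k)=p̂(k)+Θ(k)d(k) and u(k)=û(k)+Γ(k)d(k), where the net worth is w(t+1)=Σ_{k=0}^{t}( ê(k)+d(k)+û(k)+Γ(k)d(k) + Aᵀp(k) − p(k) ), for every period t∈{0,…,T−1} and every node i, the minimum over disturbance sequences [d]∈𝒟 of w_i(t+1) equals ŵ_i(t+1) − Σ_{k=0}^{t} ( |I + Γ(k) + (Aᵀ−I)Θ(k)| r(k) )_i, where ŵ(t+1)=Σ_{k=0}^{t}( ê(k)+û(k)+Aᵀp̂(k)−p̂(k) ); moreover this minimum is attained. -/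
/-!
Each period's net-worth increment is the nominal increment plus `(M k *ᵥ d k) i` with
`M k = I + Γ k + (Aᵀ - I) Θ k`, so `w_i(t+1)` is `ŵ_i(t+1)` plus a linear form in the
disturbances. A linear form `∑ c_a d_a` over the box `|d_a| ≤ r_a` is minimised by taking
`d_a = -r_a` where `c_a ≥ 0` and `d_a = r_a` elsewhere, with value `-∑ |c_a| r_a`.
-/

open Finset Matrix

section BoxMinimum

variable {ι : Type*}

theorem neg_sum_abs_mul_le_sum_mul (s : Finset ι) (c d r : ι → ℝ)
    (hd : ∀ a ∈ s, |d a| ≤ r a) :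
    -∑ a ∈ s, |c a| * r a ≤ ∑ a ∈ s, c a * d a := by
  rw [← sum_neg_distrib]
  gcongr with a ha
  calc -(|c a| * r a) ≤ -(|c a| * |d a|) := by gcongr; exact hd a ha
    _ = -|c a * d a| := by rw [abs_mul]
    _ ≤ c a * d a := neg_abs_le _

noncomputable def worstCaseDisturbance (c r : ι → ℝ) (a : ι) : ℝ :=
  if 0 ≤ c a then -r a else r a

theorem abs_worstCaseDisturbance (c r : ι → ℝ) {a : ι} (hr : 0 ≤ r a) :
    |worstCaseDisturbance c r a| = r a := by
  unfold worstCaseDisturbance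
  split_ifs <;> simp [abs_of_nonneg hr]

theorem sum_mul_worstCaseDisturbance (s : Finset ι) (c r : ι → ℝ) :
    ∑ a ∈ s, c a * worstCaseDisturbance c r a = -∑ a ∈ s, |c a| * r a := by
  rw [← sum_neg_distrib]
  refine sum_congr rfl fun a _ => ?_
  unfold worstCaseDisturbance
  split_ifs with hc
  · rw [abs_of_nonneg hc]; ring
  · rw [abs_of_neg (not_le.mp hc)]; ring

end BoxMinimum

theorem netWorth_increment_eq {R m : Type*} [CommRing R] [Fintype m] [DecidableEq m]
    (A Θ Γ : Matrix m m R) (e u p d : m → R) (i : m) :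
    e i + d i + (u i + ∑ j, Γ i j * d j)
        + (∑ j, A j i * (p j + ∑ l, Θ j l * d l)) - (p i + ∑ j, Θ i j * d j)
      = (e i + u i + (∑ j, A j i * p j) - p i)
        + ∑ j, (1 + Γ + (A.transpose - 1) * Θ) i j * d j := by
  have hM : (1 + Γ + (A.transpose - 1) * Θ) *ᵥ d
      = d + Γ *ᵥ d + A.transpose *ᵥ (Θ *ᵥ d) - Θ *ᵥ d := by
    rw [add_mulVec, add_mulVec, one_mulVec, sub_mul, one_mul, sub_mulVec, ← mulVec_mulVec]
    abel
  have hMi := congrFun hM i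
  simp only [mulVec, dotProduct, Pi.add_apply, Pi.sub_apply, transpose_apply] at hMi
  simp only [mul_add, sum_add_distrib, hMi]
  ring

theorem stmt16_worst_case_net_worth_general (n T : ℕ)
    (A : Matrix (Fin n) (Fin n) ℝ)
    (ehat : ℕ → Fin n → ℝ)
    (phat uhat : ℕ → Fin n → ℝ) (Θ Γ : ℕ → Matrix (Fin n) (Fin n) ℝ)
    (r : ℕ → Fin n → ℝ) (hr : ∀ t, t < T → ∀ j, 0 ≤ r t j)
    (t : ℕ) (ht : t < T) (i : Fin n) :
    IsLeast {x : ℝ | ∃ d : ℕ → Fin n → ℝ, (∀ k, k < T → ∀ j, |d k j| ≤ r k j) ∧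
        x = ∑ k ∈ range (t + 1),
          (ehat k i + d k i + (uhat k i + ∑ j, Γ k i j * d k j)
            + (∑ j, A j i * (phat k j + ∑ l, Θ k j l * d k l))
            - (phat k i + ∑ j, Θ k i j * d k j))}
      ((∑ k ∈ range (t + 1),
          (ehat k i + uhat k i + (∑ j, A j i * phat k j) - phat k i))
        - ∑ k ∈ range (t + 1), ∑ j,
            |(1 + Γ k + (A.transpose - 1) * Θ k) i j| * r k j) := by
  have hw : ∀ d : ℕ → Fin n → ℝ, ∑ k ∈ range (t + 1),
      (ehat k i + d k i + (uhat k i + ∑ j, Γ k i j * d k j)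
        + (∑ j, A j i * (phat k j + ∑ l, Θ k j l * d k l))
        - (phat k i + ∑ j, Θ k i j * d k j))
      = ∑ k ∈ range (t + 1), (ehat k i + uhat k i + (∑ j, A j i * phat k j) - phat k i)
        + ∑ k ∈ range (t + 1), ∑ j, (1 + Γ k + (A.transpose - 1) * Θ k) i j * d k j := by
    intro d
    rw [← sum_add_distrib]
    exact sum_congr rfl fun k _ => netWorth_increment_eq A (Θ k) (Γ k) _ _ _ _ i
  have hkT : ∀ k ∈ range (t + 1), k < T := fun k hk => by
    have := mem_range.mp hk; omega
  refine ⟨⟨fun k => worstCaseDisturbance ((1 + Γ k + (A.transpose - 1) * Θ k) i) (r k),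
    ?_, ?_⟩, ?_⟩
  · exact fun k hk j => (abs_worstCaseDisturbance _ _ (hr k hk j)).le
  · rw [hw, sub_eq_add_neg, ← sum_neg_distrib]
    exact congrArg _ (sum_congr rfl fun k _ => (sum_mul_worstCaseDisturbance _ _ _).symm)
  · rintro x ⟨d, hd, rfl⟩
    rw [hw, sub_eq_add_neg, ← sum_neg_distrib]
    gcongr with k hk
    exact neg_sum_abs_mul_le_sum_mul _ _ _ _ fun j _ => hd k (hkT k hk) j

theorem stmt16_worst_case_net_worth (n T : ℕ) (hn : 1 ≤ n) (hT : 1 ≤ T)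
    (A : Matrix (Fin n) (Fin n) ℝ) (hA : ∀ i j, 0 ≤ A i j)
    (ehat : ℕ → Fin n → ℝ) (he : ∀ t, t < T → ∀ i, 0 ≤ ehat t i)
    (phat uhat : ℕ → Fin n → ℝ) (Θ Γ : ℕ → Matrix (Fin n) (Fin n) ℝ)
    (r : ℕ → Fin n → ℝ) (hr : ∀ t, t < T → ∀ j, 0 ≤ r t j)
    (t : ℕ) (ht : t < T) (i : Fin n) :
    IsLeast {x : ℝ | ∃ d : ℕ → Fin n → ℝ, (∀ k, k < T → ∀ j, |d k j| ≤ r k j) ∧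
        x = ∑ k ∈ range (t + 1),
          (ehat k i + d k i + (uhat k i + ∑ j, Γ k i j * d k j)
            + (∑ j, A j i * (phat k j + ∑ l, Θ k j l * d k l))
            - (phat k i + ∑ j, Θ k i j * d k j))}
      ((∑ k ∈ range (t + 1),
          (ehat k i + uhat k i + (∑ j, A j i * phat k j) - phat k i))
        - ∑ k ∈ range (t + 1), ∑ j,
            |(1 + Γ k + (A.transpose - 1) * Θ k) i j| * r k j) :=
  stmt16_worst_case_net_worth_general n T A ehat phat uhat Θ Γ r hr t ht i
end

section
/- In the robust pro-rata setting with affine policies p(t)=p̂(t)+Θ(t)d(t) and u(t)=û(t)+Γ(t)d(t), the worst-case cost satisfies: max over [d]∈𝒟 of J([p],[u]) = J([p̂],[û]) + Σ_{t=0}^{T−1} Σ_{j=1}^{n} |((γΓ(t) − β_tΘ(t))ᵀ1)_j| r_j(t), where J([p],[u]) = β₀·1ᵀp̄ − Σ_{t=0}^{T−1} β_t·1ᵀp(t) + γ·Σ_{t=0}^{T−1} 1ᵀu(t), and the maximum is attained. -/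
open Finset

noncomputable section

/-- The coefficient `β_t = η α^{T-t} + (1-η) a_t`, where `a_t = Σ_{j=0}^{T-t-1} α^j`. -/
def betaCoef (T : ℕ) (α η : ℝ) (t : ℕ) : ℝ :=
  η * α ^ (T - t) + (1 - η) * ∑ j ∈ Finset.range (T - t), α ^ j

/-!
The cost is affine in the policies, and an affine policy is linear in the disturbance, so
`J` is an affine function `J([p̂],[û]) + Σ_t Σ_j c_j(t) d_j(t)` of `[d]` whose coefficients
`c(t) = (γΓ(t) − β_tΘ(t))ᵀ1` are column sums. Over the box `|d_j(t)| ≤ r_j(t)` such a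
function is maximised coordinatewise by `d_j(t) = sign(c_j(t)) r_j(t)`, with value
`J([p̂],[û]) + Σ_t Σ_j |c_j(t)| r_j(t)`.
-/

section Cost

open scoped Matrix

variable {ι : Type*} [Fintype ι]

/-- The cost `J([p],[u])`, with the weights `β_t` as a parameter. -/
def proRataCost (β : ℕ → ℝ) (γ : ℝ) (T : ℕ) (pbar : ι → ℝ) (p u : ℕ → ι → ℝ) : ℝ :=
  β 0 * ∑ i, pbar i - ∑ t ∈ range T, β t * ∑ i, p t i + γ * ∑ t ∈ range T, ∑ i, u t i

theorem proRataCost_add (β : ℕ → ℝ) (γ : ℝ) (T : ℕ) (pbar : ι → ℝ) (p q u w : ℕ → ι → ℝ) :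
    proRataCost β γ T pbar (p + q) (u + w) =
      proRataCost β γ T pbar p u + ∑ t ∈ range T, ∑ i, (γ * w t i - β t * q t i) := by
  simp only [proRataCost, Pi.add_apply, sum_add_distrib, mul_add, sum_sub_distrib, mul_sum]
  ring

theorem Matrix.sum_mulVec_eq_sum_colSum {m R : Type*} [Fintype m] [NonUnitalNonAssocSemiring R]
    (M : Matrix ι m R) (v : m → R) :
    ∑ i, (M *ᵥ v) i = ∑ j, (∑ i, M i j) * v j := by
  simp only [Matrix.mulVec, dotProduct, sum_mul]
  exact sum_comm

theorem proRataCost_affinePolicy (β : ℕ → ℝ) (γ : ℝ) (T : ℕ) (pbar : ι → ℝ)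
    (phat uhat d : ℕ → ι → ℝ) (Θ Γ : ℕ → Matrix ι ι ℝ) :
    proRataCost β γ T pbar (fun t => phat t + Θ t *ᵥ d t) (fun t => uhat t + Γ t *ᵥ d t) =
      proRataCost β γ T pbar phat uhat +
        ∑ t ∈ range T, ∑ j, (∑ i, (γ * Γ t i j - β t * Θ t i j)) * d t j := by
  rw [← Pi.add_def, ← Pi.add_def, proRataCost_add]
  congr 1
  refine sum_congr rfl fun t _ => ?_
  calc ∑ i, (γ * (Γ t *ᵥ d t) i - β t * (Θ t *ᵥ d t) i)
      = ∑ i, ((γ • Γ t - β t • Θ t) *ᵥ d t) i := by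
        simp only [Matrix.sub_mulVec, Matrix.smul_mulVec, Pi.sub_apply, Pi.smul_apply, smul_eq_mul]
    _ = _ := Matrix.sum_mulVec_eq_sum_colSum _ _

end Cost

section LinearOrderedRing

variable {R : Type*} [Ring R] [LinearOrder R] [IsStrictOrderedRing R]

theorem mul_le_abs_mul_of_abs_le {c d r : R} (hd : |d| ≤ r) : c * d ≤ |c| * r :=
  calc c * d ≤ |c| * |d| := (le_abs_self _).trans_eq (abs_mul c d)
    _ ≤ |c| * r := mul_le_mul_of_nonneg_left hd (abs_nonneg c)

theorem abs_sign_mul_le {c r : R} (hr : 0 ≤ r) : |(SignType.sign c : R) * r| ≤ r := by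
  rcases lt_trichotomy c 0 with hc | rfl | hc <;> simp [*, abs_of_nonneg hr]

end LinearOrderedRing

theorem stmt17_worst_case_cost_general (n T : ℕ)
    (α η γ : ℝ)
    (pbar : Fin n → ℝ)
    (phat uhat : ℕ → Fin n → ℝ) (Θ Γ : ℕ → Matrix (Fin n) (Fin n) ℝ)
    (r : ℕ → Fin n → ℝ) (hr : ∀ t, t < T → ∀ j, 0 ≤ r t j) :
    IsGreatest {x : ℝ | ∃ d : ℕ → Fin n → ℝ, (∀ k, k < T → ∀ j, |d k j| ≤ r k j) ∧
        x = betaCoef T α η 0 * ∑ i, pbar i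
          - ∑ t ∈ range T, betaCoef T α η t * ∑ i, (phat t i + ∑ j, Θ t i j * d t j)
          + γ * ∑ t ∈ range T, ∑ i, (uhat t i + ∑ j, Γ t i j * d t j)}
      ((betaCoef T α η 0 * ∑ i, pbar i
          - ∑ t ∈ range T, betaCoef T α η t * ∑ i, phat t i
          + γ * ∑ t ∈ range T, ∑ i, uhat t i)
        + ∑ t ∈ range T, ∑ j,
            |∑ i, (γ * Γ t i j - betaCoef T α η t * Θ t i j)| * r t j) := by
  set c : ℕ → Fin n → ℝ := fun t j => ∑ i, (γ * Γ t i j - betaCoef T α η t * Θ t i j)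
  have hJ := proRataCost_affinePolicy (betaCoef T α η) γ T pbar phat uhat
  refine ⟨⟨fun t j => SignType.sign (c t j) * r t j,
    fun k hk j => abs_sign_mul_le (hr k hk j), ?_⟩, ?_⟩
  · refine ((hJ _ Θ Γ).trans ?_).symm
    congr 1
    refine sum_congr rfl fun t _ => sum_congr rfl fun j _ => ?_
    rw [← mul_assoc, self_mul_sign]
  · rintro x ⟨d, hd, rfl⟩
    refine (hJ d Θ Γ).trans_le (add_le_add_right ?_ _)
    refine sum_le_sum fun t ht => sum_le_sum fun j _ => ?_
    exact mul_le_abs_mul_of_abs_le (hd t (mem_range.mp ht) j)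

theorem stmt17_worst_case_cost (n T : ℕ) (hn : 1 ≤ n) (hT : 1 ≤ T)
    (α η γ : ℝ) (hα : 1 ≤ α) (hη0 : 0 ≤ η) (hη1 : η < 1) (hγ : 0 ≤ γ)
    (pbar : Fin n → ℝ)
    (phat uhat : ℕ → Fin n → ℝ) (Θ Γ : ℕ → Matrix (Fin n) (Fin n) ℝ)
    (r : ℕ → Fin n → ℝ) (hr : ∀ t, t < T → ∀ j, 0 ≤ r t j) :
    IsGreatest {x : ℝ | ∃ d : ℕ → Fin n → ℝ, (∀ k, k < T → ∀ j, |d k j| ≤ r k j) ∧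
        x = betaCoef T α η 0 * ∑ i, pbar i
          - ∑ t ∈ range T, betaCoef T α η t * ∑ i, (phat t i + ∑ j, Θ t i j * d t j)
          + γ * ∑ t ∈ range T, ∑ i, (uhat t i + ∑ j, Γ t i j * d t j)}
      ((betaCoef T α η 0 * ∑ i, pbar i
          - ∑ t ∈ range T, betaCoef T α η t * ∑ i, phat t i
          + γ * ∑ t ∈ range T, ∑ i, uhat t i)
        + ∑ t ∈ range T, ∑ j,
            |∑ i, (γ * Γ t i j - betaCoef T α η t * Θ t i j)| * r t j) :=
  stmt17_worst_case_cost_general n T α η γ pbar phat uhat Θ Γ r hr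
end
end

section
/- In the robust pro-rata setting, the finite-horizon robust control problem — minimize over affine policies ([p̂],[û],[Θ],[Γ]) the worst-case cost max_{[d]∈𝒟} J([p],[u]) subject to the robust constraints holding for every [d]∈𝒟 (p(t)≥0, u(t)≥0, Σ_{k=0}^{t} α^{t−k} p(k) ≤ α^t p̄, w(t+1)≥0, B(t)≤F(t) for all t) — has the same optimal value as the explicit linear program: minimize J̄([p̂],[û],[Θ],[Γ]) = β₀·1ᵀp̄ − Σ_t β_t·1ᵀp̂(t) + γ·Σ_t 1ᵀû(t) + Σ_t Σ_j |((γΓ(t)−β_tΘ(t))ᵀ1)_j| r_j(t) subject to, for all t: p̂(t)−|Θ(t)|r(t)≥0; û(t)−|Γ(t)|r(t)≥0; Σ_{k=0}^{t} α^{t−k}(p̂(k)+|Θ(k)|r(k)) ≤ α^t p̄; ŵ(t+1)−Σ_{k=0}^{t}|I+Γ(k)+(Aᵀ−I)Θ(k)|r(k) ≥ 0; and Σ_{τ=0}^{t}(1ᵀû(τ)+Σ_j |(Γ(τ)ᵀ1)_j| r_j(τ)) ≤ F(t); moreover a policy is optimal for the robust problem if and only if it is optimal for the explicit linear program. -/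
open Finset

noncomputable section

/-- The set of admissible disturbance sequences `𝒟`. -/
def distOK (n T : ℕ) (r : ℕ → Fin n → ℝ) (d : ℕ → Fin n → ℝ) : Prop :=
  ∀ k, k < T → ∀ j, |d k j| ≤ r k j

/-- The realized cost `J([p],[u])` of an affine policy under disturbance sequence `d`. -/
def realCost (n T : ℕ) (α η γ : ℝ) (pbar : Fin n → ℝ)
    (phat uhat : ℕ → Fin n → ℝ) (Θ Γ : ℕ → Matrix (Fin n) (Fin n) ℝ)
    (d : ℕ → Fin n → ℝ) : ℝ :=
  betaCoef T α η 0 * ∑ i, pbar i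
    - ∑ t ∈ Finset.range T, betaCoef T α η t * ∑ i, (phat t i + ∑ j, Θ t i j * d t j)
    + γ * ∑ t ∈ Finset.range T, ∑ i, (uhat t i + ∑ j, Γ t i j * d t j)

/-- The worst-case cost of an affine policy over all admissible disturbances. -/
def wcCost (n T : ℕ) (α η γ : ℝ) (pbar : Fin n → ℝ) (r : ℕ → Fin n → ℝ)
    (phat uhat : ℕ → Fin n → ℝ) (Θ Γ : ℕ → Matrix (Fin n) (Fin n) ℝ) : ℝ :=
  sSup {x : ℝ | ∃ d : ℕ → Fin n → ℝ, distOK n T r d ∧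
    x = realCost n T α η γ pbar phat uhat Θ Γ d}

/-- Robust feasibility: all operational constraints hold for every admissible disturbance. -/
def RobustFeasible (n T : ℕ) (α : ℝ) (pbar : Fin n → ℝ)
    (A : Matrix (Fin n) (Fin n) ℝ) (ehat : ℕ → Fin n → ℝ) (F : ℕ → ℝ)
    (r : ℕ → Fin n → ℝ) (phat uhat : ℕ → Fin n → ℝ)
    (Θ Γ : ℕ → Matrix (Fin n) (Fin n) ℝ) : Prop :=
  ∀ d : ℕ → Fin n → ℝ, distOK n T r d →
    ∀ t, t < T →
      (∀ i, 0 ≤ phat t i + ∑ j, Θ t i j * d t j) ∧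
      (∀ i, 0 ≤ uhat t i + ∑ j, Γ t i j * d t j) ∧
      (∀ i, ∑ k ∈ Finset.range (t + 1),
          α ^ (t - k) * (phat k i + ∑ j, Θ k i j * d k j) ≤ α ^ t * pbar i) ∧
      (∀ i, 0 ≤ ∑ k ∈ Finset.range (t + 1),
          (ehat k i + d k i + (uhat k i + ∑ j, Γ k i j * d k j)
            + (∑ j, A j i * (phat k j + ∑ l, Θ k j l * d k l))
            - (phat k i + ∑ j, Θ k i j * d k j))) ∧
      (∑ τ ∈ Finset.range (t + 1), ∑ i, (uhat τ i + ∑ j, Γ τ i j * d τ j) ≤ F t)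

/-- Feasibility for the explicit (deterministic) linear program. -/
def LPFeasible (n T : ℕ) (α : ℝ) (pbar : Fin n → ℝ)
    (A : Matrix (Fin n) (Fin n) ℝ) (ehat : ℕ → Fin n → ℝ) (F : ℕ → ℝ)
    (r : ℕ → Fin n → ℝ) (phat uhat : ℕ → Fin n → ℝ)
    (Θ Γ : ℕ → Matrix (Fin n) (Fin n) ℝ) : Prop :=
  ∀ t, t < T →
    (∀ i, 0 ≤ phat t i - ∑ j, |Θ t i j| * r t j) ∧
    (∀ i, 0 ≤ uhat t i - ∑ j, |Γ t i j| * r t j) ∧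
    (∀ i, ∑ k ∈ Finset.range (t + 1),
        α ^ (t - k) * (phat k i + ∑ j, |Θ k i j| * r k j) ≤ α ^ t * pbar i) ∧
    (∀ i, 0 ≤ (∑ k ∈ Finset.range (t + 1),
          (ehat k i + uhat k i + (∑ j, A j i * phat k j) - phat k i))
        - ∑ k ∈ Finset.range (t + 1), ∑ j,
            |(1 + Γ k + (A.transpose - 1) * Θ k) i j| * r k j) ∧
    (∑ τ ∈ Finset.range (t + 1), ((∑ i, uhat τ i) + ∑ j, |∑ i, Γ τ i j| * r τ j) ≤ F t)

/-- The objective `J̄` of the explicit linear program. -/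
def lpCost (n T : ℕ) (α η γ : ℝ) (pbar : Fin n → ℝ) (r : ℕ → Fin n → ℝ)
    (phat uhat : ℕ → Fin n → ℝ) (Θ Γ : ℕ → Matrix (Fin n) (Fin n) ℝ) : ℝ :=
  betaCoef T α η 0 * ∑ i, pbar i
    - ∑ t ∈ Finset.range T, betaCoef T α η t * ∑ i, phat t i
    + γ * ∑ t ∈ Finset.range T, ∑ i, uhat t i
    + ∑ t ∈ Finset.range T, ∑ j,
        |∑ i, (γ * Γ t i j - betaCoef T α η t * Θ t i j)| * r t j

/-!
Every robust constraint and the realized cost are affine in the disturbance `d`, which ranges over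
a product of intervals `[-r, r]`. A linear form `∑ c k j * d k j` is bounded on that box by
`∑ |c k j| * r k j`, with equality at the vertex `d k j = sign (c k j) * r k j`. Hence each robust
constraint is equivalent to its LP counterpart, and the worst-case cost of every policy equals its
LP cost, so the two problems have the same feasible policies, costs, optimizers and optimal value.
-/

section WorstCaseDisturbance

variable {n T : ℕ} {r : ℕ → Fin n → ℝ}

-- The vertex of the disturbance box maximizing `∑ c k j * d k j`.
def alignedDist (r c : ℕ → Fin n → ℝ) : ℕ → Fin n → ℝ :=
  fun k j => SignType.sign (c k j) * r k j

lemma distOK_alignedDist (hr : ∀ t, t < T → ∀ j, 0 ≤ r t j) (c : ℕ → Fin n → ℝ) :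
    distOK n T r (alignedDist r c) := by
  intro k hk j
  rw [alignedDist, abs_mul, abs_of_nonneg (hr k hk j)]
  refine mul_le_of_le_one_left (hr k hk j) ?_
  rcases SignType.sign (c k j) with _ | _ | _ <;> simp

lemma mul_alignedDist (c : ℕ → Fin n → ℝ) (k : ℕ) (j : Fin n) :
    c k j * alignedDist r c k j = |c k j| * r k j := by
  rw [alignedDist, ← mul_assoc, self_mul_sign]

lemma sum_mul_le_sum_abs_mul_of_distOK {S : Finset ℕ} (hS : S ⊆ range T)
    {d : ℕ → Fin n → ℝ} (hd : distOK n T r d) (c : ℕ → Fin n → ℝ) :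
    ∑ k ∈ S, ∑ j, c k j * d k j ≤ ∑ k ∈ S, ∑ j, |c k j| * r k j :=
  sum_le_sum fun k hk => sum_le_sum fun j _ =>
    calc c k j * d k j ≤ |c k j| * |d k j| := (le_abs_self _).trans (abs_mul _ _).le
      _ ≤ |c k j| * r k j :=
        mul_le_mul_of_nonneg_left (hd k (mem_range.1 (hS hk)) j) (abs_nonneg _)

theorem isGreatest_add_sum_mul_distOK (hr : ∀ t, t < T → ∀ j, 0 ≤ r t j)
    {S : Finset ℕ} (hS : S ⊆ range T) (a : ℝ) (c : ℕ → Fin n → ℝ) :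
    IsGreatest {x | ∃ d, distOK n T r d ∧ x = a + ∑ k ∈ S, ∑ j, c k j * d k j}
      (a + ∑ k ∈ S, ∑ j, |c k j| * r k j) := by
  refine ⟨⟨alignedDist r c, distOK_alignedDist hr c, by simp only [mul_alignedDist]⟩, ?_⟩
  rintro _ ⟨d, hd, rfl⟩
  exact add_le_add_right (sum_mul_le_sum_abs_mul_of_distOK hS hd c) a

theorem forall_distOK_add_sum_mul_le_iff (hr : ∀ t, t < T → ∀ j, 0 ≤ r t j)
    {S : Finset ℕ} (hS : S ⊆ range T) (a b : ℝ) (c : ℕ → Fin n → ℝ) :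
    (∀ d, distOK n T r d → a + ∑ k ∈ S, ∑ j, c k j * d k j ≤ b) ↔
      a + ∑ k ∈ S, ∑ j, |c k j| * r k j ≤ b := by
  obtain ⟨⟨d, hd, hmax⟩, hbound⟩ := isGreatest_add_sum_mul_distOK hr hS a c
  exact ⟨fun h => hmax ▸ h d hd, fun h d hd => (hbound ⟨d, hd, rfl⟩).trans h⟩

theorem forall_distOK_le_add_sum_mul_iff (hr : ∀ t, t < T → ∀ j, 0 ≤ r t j)
    {S : Finset ℕ} (hS : S ⊆ range T) (a b : ℝ) (c : ℕ → Fin n → ℝ) :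
    (∀ d, distOK n T r d → b ≤ a + ∑ k ∈ S, ∑ j, c k j * d k j) ↔
      b ≤ a - ∑ k ∈ S, ∑ j, |c k j| * r k j := by
  have h := forall_distOK_add_sum_mul_le_iff hr hS (-a) (-b) (fun k j => -c k j)
  simp only [neg_mul, sum_neg_distrib, abs_neg] at h
  constructor
  · intro hlow
    linarith [h.1 fun d hd => by linarith [hlow d hd]]
  · intro hlow d hd
    linarith [h.2 (by linarith) d hd]

end WorstCaseDisturbance

section RobustConstraints

variable {n T : ℕ} {r : ℕ → Fin n → ℝ}

lemma sum_add_sum_mul_eq (u : Fin n → ℝ) (G : Matrix (Fin n) (Fin n) ℝ) (x : Fin n → ℝ) :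
    ∑ i, (u i + ∑ j, G i j * x j) = ∑ i, u i + ∑ j, (∑ i, G i j) * x j := by
  simp only [sum_add_distrib, sum_mul]
  exact congrArg _ sum_comm

lemma netFlow_eq (A Θ Γ : Matrix (Fin n) (Fin n) ℝ) (e p u x : Fin n → ℝ) (i : Fin n) :
    e i + x i + (u i + ∑ j, Γ i j * x j) + ∑ j, A j i * (p j + ∑ l, Θ j l * x l)
        - (p i + ∑ j, Θ i j * x j) =
      (e i + u i + ∑ j, A j i * p j - p i) + ∑ l, (1 + Γ + (A.transpose - 1) * Θ) i l * x l := by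
  change _ = _ + Matrix.mulVec (1 + Γ + (A.transpose - 1) * Θ) x i
  rw [Matrix.add_mulVec, Matrix.add_mulVec, ← Matrix.mulVec_mulVec, Matrix.sub_mulVec,
    Matrix.one_mulVec, Matrix.one_mulVec]
  simp only [Pi.add_apply, Pi.sub_apply, Matrix.mulVec, dotProduct, Matrix.transpose_apply,
    mul_add, sum_add_distrib]
  ring

lemma forall_distOK_nonneg_add_sum_mul_iff (hr : ∀ t, t < T → ∀ j, 0 ≤ r t j) {t : ℕ}
    (ht : t < T) (p : ℝ) (θ : Fin n → ℝ) :
    (∀ d, distOK n T r d → 0 ≤ p + ∑ j, θ j * d t j) ↔ 0 ≤ p - ∑ j, |θ j| * r t j := by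
  simpa only [sum_singleton] using
    forall_distOK_le_add_sum_mul_iff hr (singleton_subset_iff.2 (mem_range.2 ht)) p 0
      (fun _ j => θ j)

lemma forall_distOK_weighted_sum_le_iff (hr : ∀ t, t < T → ∀ j, 0 ≤ r t j)
    {S : Finset ℕ} (hS : S ⊆ range T) {w : ℕ → ℝ} (hw : ∀ k, 0 ≤ w k) (p : ℕ → ℝ)
    (θ : ℕ → Fin n → ℝ) (b : ℝ) :
    (∀ d, distOK n T r d → ∑ k ∈ S, w k * (p k + ∑ j, θ k j * d k j) ≤ b) ↔
      ∑ k ∈ S, w k * (p k + ∑ j, |θ k j| * r k j) ≤ b := by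
  have expand : ∀ θ d : ℕ → Fin n → ℝ, ∑ k ∈ S, w k * (p k + ∑ j, θ k j * d k j) =
      ∑ k ∈ S, w k * p k + ∑ k ∈ S, ∑ j, w k * θ k j * d k j := by
    intro θ d
    simp only [mul_add, sum_add_distrib, mul_sum, mul_assoc]
  have abs_weighted : ∀ k j, w k * |θ k j| = |w k * θ k j| := fun k j => by
    rw [abs_mul, abs_of_nonneg (hw k)]
  rw [expand (fun k j => |θ k j|) r]
  simp only [expand, abs_weighted]
  exact forall_distOK_add_sum_mul_le_iff hr hS _ b (fun k j => w k * θ k j)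

lemma forall_distOK_budget_le_iff (hr : ∀ t, t < T → ∀ j, 0 ≤ r t j)
    {S : Finset ℕ} (hS : S ⊆ range T) (u : ℕ → Fin n → ℝ)
    (Γ : ℕ → Matrix (Fin n) (Fin n) ℝ) (b : ℝ) :
    (∀ d, distOK n T r d → ∑ k ∈ S, ∑ i, (u k i + ∑ j, Γ k i j * d k j) ≤ b) ↔
      ∑ k ∈ S, ((∑ i, u k i) + ∑ j, |∑ i, Γ k i j| * r k j) ≤ b := by
  simp only [sum_add_sum_mul_eq]
  simp only [sum_add_distrib]
  exact forall_distOK_add_sum_mul_le_iff hr hS _ b (fun k j => ∑ i, Γ k i j)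

end RobustConstraints

section Reformulation

variable {n T : ℕ} {α η γ : ℝ} {pbar : Fin n → ℝ} {A : Matrix (Fin n) (Fin n) ℝ}
  {ehat : ℕ → Fin n → ℝ} {F : ℕ → ℝ} {r : ℕ → Fin n → ℝ}

lemma forall_distOK_netWorth_nonneg_iff (hr : ∀ t, t < T → ∀ j, 0 ≤ r t j) {t : ℕ}
    (ht : t < T) (phat uhat : ℕ → Fin n → ℝ) (Θ Γ : ℕ → Matrix (Fin n) (Fin n) ℝ) (i : Fin n) :
    (∀ d, distOK n T r d → 0 ≤ ∑ k ∈ range (t + 1),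
        (ehat k i + d k i + (uhat k i + ∑ j, Γ k i j * d k j)
          + (∑ j, A j i * (phat k j + ∑ l, Θ k j l * d k l))
          - (phat k i + ∑ j, Θ k i j * d k j))) ↔
      0 ≤ (∑ k ∈ range (t + 1), (ehat k i + uhat k i + (∑ j, A j i * phat k j) - phat k i))
        - ∑ k ∈ range (t + 1), ∑ j, |(1 + Γ k + (A.transpose - 1) * Θ k) i j| * r k j := by
  simp only [netFlow_eq, sum_add_distrib]
  exact forall_distOK_le_add_sum_mul_iff hr (range_subset_range.2 ht) _ 0
    (fun k l => (1 + Γ k + (A.transpose - 1) * Θ k) i l)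

theorem robustFeasible_iff_lpFeasible (hα : 0 ≤ α) (hr : ∀ t, t < T → ∀ j, 0 ≤ r t j)
    (phat uhat : ℕ → Fin n → ℝ) (Θ Γ : ℕ → Matrix (Fin n) (Fin n) ℝ) :
    RobustFeasible n T α pbar A ehat F r phat uhat Θ Γ ↔
      LPFeasible n T α pbar A ehat F r phat uhat Θ Γ := by
  have cap_iff : ∀ {t} (ht : t < T) i, _ := fun {t} ht i =>
    forall_distOK_weighted_sum_le_iff hr (range_subset_range.2 ht)
      (fun k => pow_nonneg hα (t - k)) (phat · i) (Θ · i) (α ^ t * pbar i)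
  have budget_iff : ∀ {t} (ht : t < T), _ := fun {t} ht =>
    forall_distOK_budget_le_iff hr (range_subset_range.2 ht) uhat Γ (F t)
  constructor
  · intro h t ht
    exact ⟨fun i => (forall_distOK_nonneg_add_sum_mul_iff hr ht _ _).1 fun d hd =>
        (h d hd t ht).1 i,
      fun i => (forall_distOK_nonneg_add_sum_mul_iff hr ht _ _).1 fun d hd => (h d hd t ht).2.1 i,
      fun i => (cap_iff ht i).1 fun d hd => (h d hd t ht).2.2.1 i,
      fun i => (forall_distOK_netWorth_nonneg_iff hr ht _ _ _ _ i).1 fun d hd =>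
        (h d hd t ht).2.2.2.1 i,
      (budget_iff ht).1 fun d hd => (h d hd t ht).2.2.2.2⟩
  · intro h d hd t ht
    obtain ⟨hp, hu, hcap, hw, hB⟩ := h t ht
    exact ⟨fun i => (forall_distOK_nonneg_add_sum_mul_iff hr ht _ _).2 (hp i) d hd,
      fun i => (forall_distOK_nonneg_add_sum_mul_iff hr ht _ _).2 (hu i) d hd,
      fun i => (cap_iff ht i).2 (hcap i) d hd,
      fun i => (forall_distOK_netWorth_nonneg_iff hr ht _ _ _ _ i).2 (hw i) d hd,
      (budget_iff ht).2 hB d hd⟩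

lemma sum_sub_mul_eq (a b : ℝ) (G Θ : Matrix (Fin n) (Fin n) ℝ) (x : Fin n → ℝ) :
    ∑ j, (∑ i, (a * G i j - b * Θ i j)) * x j =
      a * ∑ j, (∑ i, G i j) * x j - b * ∑ j, (∑ i, Θ i j) * x j := by
  simp only [mul_sum, sum_mul, ← sum_sub_distrib, sub_mul, mul_assoc]

lemma realCost_eq (phat uhat : ℕ → Fin n → ℝ) (Θ Γ : ℕ → Matrix (Fin n) (Fin n) ℝ)
    (d : ℕ → Fin n → ℝ) :
    realCost n T α η γ pbar phat uhat Θ Γ d =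
      (betaCoef T α η 0 * ∑ i, pbar i
        - ∑ t ∈ range T, betaCoef T α η t * ∑ i, phat t i
        + γ * ∑ t ∈ range T, ∑ i, uhat t i)
      + ∑ t ∈ range T, ∑ j,
          (∑ i, (γ * Γ t i j - betaCoef T α η t * Θ t i j)) * d t j := by
  simp only [realCost, sum_add_sum_mul_eq, sum_sub_mul_eq]
  simp only [mul_add, sum_add_distrib, sum_sub_distrib, mul_sum]
  ring

theorem wcCost_eq_lpCost (hr : ∀ t, t < T → ∀ j, 0 ≤ r t j)
    (phat uhat : ℕ → Fin n → ℝ) (Θ Γ : ℕ → Matrix (Fin n) (Fin n) ℝ) :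
    wcCost n T α η γ pbar r phat uhat Θ Γ = lpCost n T α η γ pbar r phat uhat Θ Γ := by
  simp only [wcCost, realCost_eq]
  exact (isGreatest_add_sum_mul_distOK hr subset_rfl _ _).csSup_eq

end Reformulation

theorem stmt19_robust_problem_is_LP_general (n T : ℕ)
    (α η γ : ℝ) (hα : 1 ≤ α)
    (pbar : Fin n → ℝ)
    (A : Matrix (Fin n) (Fin n) ℝ)
    (ehat : ℕ → Fin n → ℝ)
    (F : ℕ → ℝ)
    (r : ℕ → Fin n → ℝ) (hr : ∀ t, t < T → ∀ j, 0 ≤ r t j) :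
    (∀ (phat uhat : ℕ → Fin n → ℝ) (Θ Γ : ℕ → Matrix (Fin n) (Fin n) ℝ),
      (RobustFeasible n T α pbar A ehat F r phat uhat Θ Γ ∧
        ∀ (phat' uhat' : ℕ → Fin n → ℝ) (Θ' Γ' : ℕ → Matrix (Fin n) (Fin n) ℝ),
          RobustFeasible n T α pbar A ehat F r phat' uhat' Θ' Γ' →
            wcCost n T α η γ pbar r phat uhat Θ Γ ≤
              wcCost n T α η γ pbar r phat' uhat' Θ' Γ')
      ↔
      (LPFeasible n T α pbar A ehat F r phat uhat Θ Γ ∧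
        ∀ (phat' uhat' : ℕ → Fin n → ℝ) (Θ' Γ' : ℕ → Matrix (Fin n) (Fin n) ℝ),
          LPFeasible n T α pbar A ehat F r phat' uhat' Θ' Γ' →
            lpCost n T α η γ pbar r phat uhat Θ Γ ≤
              lpCost n T α η γ pbar r phat' uhat' Θ' Γ'))
    ∧
    sInf {v : ℝ | ∃ (phat uhat : ℕ → Fin n → ℝ) (Θ Γ : ℕ → Matrix (Fin n) (Fin n) ℝ),
        RobustFeasible n T α pbar A ehat F r phat uhat Θ Γ ∧
        v = wcCost n T α η γ pbar r phat uhat Θ Γ} =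
      sInf {v : ℝ | ∃ (phat uhat : ℕ → Fin n → ℝ) (Θ Γ : ℕ → Matrix (Fin n) (Fin n) ℝ),
        LPFeasible n T α pbar A ehat F r phat uhat Θ Γ ∧
        v = lpCost n T α η γ pbar r phat uhat Θ Γ} := by
  have feasible_iff := robustFeasible_iff_lpFeasible (pbar := pbar) (A := A) (ehat := ehat)
    (F := F) (zero_le_one.trans hα) hr
  have cost_eq := wcCost_eq_lpCost (α := α) (η := η) (γ := γ) (pbar := pbar) hr
  simp only [feasible_iff, cost_eq, iff_self, implies_true, and_self]

theorem stmt19_robust_problem_is_LP (n T : ℕ) (hn : 1 ≤ n) (hT : 1 ≤ T)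
    (α η γ : ℝ) (hα : 1 ≤ α) (hη0 : 0 ≤ η) (hη1 : η < 1) (hγ : 0 ≤ γ)
    (pbar : Fin n → ℝ) (hpbar : ∀ i, 0 ≤ pbar i)
    (A : Matrix (Fin n) (Fin n) ℝ) (hA : ∀ i j, 0 ≤ A i j)
    (ehat : ℕ → Fin n → ℝ) (he : ∀ t, t < T → ∀ i, 0 ≤ ehat t i)
    (F : ℕ → ℝ) (hF : ∀ t, 0 ≤ F t) (hFmono : ∀ s t, s ≤ t → F s ≤ F t)
    (r : ℕ → Fin n → ℝ) (hr : ∀ t, t < T → ∀ j, 0 ≤ r t j) :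
    (∀ (phat uhat : ℕ → Fin n → ℝ) (Θ Γ : ℕ → Matrix (Fin n) (Fin n) ℝ),
      (RobustFeasible n T α pbar A ehat F r phat uhat Θ Γ ∧
        ∀ (phat' uhat' : ℕ → Fin n → ℝ) (Θ' Γ' : ℕ → Matrix (Fin n) (Fin n) ℝ),
          RobustFeasible n T α pbar A ehat F r phat' uhat' Θ' Γ' →
            wcCost n T α η γ pbar r phat uhat Θ Γ ≤
              wcCost n T α η γ pbar r phat' uhat' Θ' Γ')
      ↔
      (LPFeasible n T α pbar A ehat F r phat uhat Θ Γ ∧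
        ∀ (phat' uhat' : ℕ → Fin n → ℝ) (Θ' Γ' : ℕ → Matrix (Fin n) (Fin n) ℝ),
          LPFeasible n T α pbar A ehat F r phat' uhat' Θ' Γ' →
            lpCost n T α η γ pbar r phat uhat Θ Γ ≤
              lpCost n T α η γ pbar r phat' uhat' Θ' Γ'))
    ∧
    sInf {v : ℝ | ∃ (phat uhat : ℕ → Fin n → ℝ) (Θ Γ : ℕ → Matrix (Fin n) (Fin n) ℝ),
        RobustFeasible n T α pbar A ehat F r phat uhat Θ Γ ∧
        v = wcCost n T α η γ pbar r phat uhat Θ Γ} =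
      sInf {v : ℝ | ∃ (phat uhat : ℕ → Fin n → ℝ) (Θ Γ : ℕ → Matrix (Fin n) (Fin n) ℝ),
        LPFeasible n T α pbar A ehat F r phat uhat Θ Γ ∧
        v = lpCost n T α η γ pbar r phat uhat Θ Γ} :=
  stmt19_robust_problem_is_LP_general n T α η γ hα pbar A ehat F r hr
end
end
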